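/- The number of 3-dimensional p×q×r matrices with entries in {0,1} and 1-marginals λ, μ, ν equals the inner product ⟨φ^λ ⊗ φ^μ ⊗ φ^ν, χ^(1^n)⟩, where χ^(1^n) is the sign character of S_n. -/

import Mathlib

open Finset Equiv
open scoped Classical

noncomputable section

/-- Value at `g` of the permutation character of `S_n` induced from the trivial character of
the Young subgroup of the composition `c`: the number of colorings of `Fin n` with fiber
sizes given by `c` that are fixed by `g`. -/
def permChar (n : ℕ) (c : ℕ → ℕ) (g : Perm (Fin n)) : ℚ :=
  Nat.card {f : Fin n → ℕ // (∀ k, Nat.card {x : Fin n // f x = k} = c k) ∧ ∀ x, f (g x) = f x}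

/-- Inner product of class functions (real-valued characters) of `S_n`. -/
def innerChar (n : ℕ) (χ ψ : Perm (Fin n) → ℚ) : ℚ :=
  (∑ g : Perm (Fin n), χ g * ψ g) / (n.factorial : ℚ)

/-- The trivial character `χ^{(n)}` of `S_n`. -/
def trivChar (n : ℕ) : Perm (Fin n) → ℚ := fun _ => 1

/-- The sign character `χ^{(1^n)}` of `S_n`. -/
def signChar (n : ℕ) : Perm (Fin n) → ℚ := fun g => ((Perm.sign g : ℤ) : ℚ)

/-- Permutation character for an integer vector: zero if some entry is negative. -/
def permCharZ (n : ℕ) (c : ℕ → ℤ) (g : Perm (Fin n)) : ℚ :=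
  if ∀ k, 0 ≤ c k then permChar n (fun k => (c k).toNat) g else 0

/-- The irreducible character `χ^a` of `S_n` indexed by the partition `a`, given by the
Jacobi–Trudi determinantal formula `χ^a = ∑_σ sgn(σ) φ^{(a_i - i + σ(i))_i}`. -/
def irrChar (n : ℕ) (a : ℕ → ℕ) (g : Perm (Fin n)) : ℚ :=
  ∑ σ : Perm (Fin n), ((Perm.sign σ : ℤ) : ℚ) *
    permCharZ n (fun i => if h : i < n then (a i : ℤ) - i + ((σ ⟨i, h⟩ : Fin n) : ℕ) else 0) g

/-- Kronecker coefficient `k(a,b,c) = ⟨χ^a ⊗ χ^b, χ^c⟩`. -/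
def kron (n : ℕ) (a b c : ℕ → ℕ) : ℚ :=
  innerChar n (fun g => irrChar n a g * irrChar n b g) (irrChar n c)

/-- Extend a vector indexed by `Fin p` to `ℕ` by zeros. -/
def extc {p : ℕ} (l : Fin p → ℕ) : ℕ → ℕ := fun i => if h : i < p then l ⟨i, h⟩ else 0

/-- Dominance order: `a ⊵ b`. -/
def Dominates (a b : ℕ → ℕ) : Prop :=
  ∀ k, ∑ i ∈ Finset.range k, b i ≤ ∑ i ∈ Finset.range k, a i

/-- Conjugate (transpose) of a partition with at most `n` parts. -/
def conjFun (n : ℕ) (a : ℕ → ℕ) : ℕ → ℕ :=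
  fun j => ((Finset.range n).filter (fun i => j < a i)).card

/-- `a` is a partition of `n` (weakly decreasing, supported on the first `n` parts). -/
def IsPartitionFun (n : ℕ) (a : ℕ → ℕ) : Prop :=
  (∀ i j, i ≤ j → a j ≤ a i) ∧ (∀ i, n ≤ i → a i = 0) ∧ ∑ i ∈ Finset.range n, a i = n

/-- The weakly decreasing sequence of parts of `P : Nat.Partition n`. -/
def pf {n : ℕ} (P : n.Partition) : ℕ → ℕ :=
  fun i => ((P.parts.sort (· ≤ ·)).reverse).getD i 0

/-- The parts of `P : Nat.Partition n` as a vector of length `n`. -/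
def pfin {n : ℕ} (P : n.Partition) : Fin n → ℕ := fun k => pf P k

/-- Number of cells of the skew shape `a/b` where the filling `T` has entry `k`. -/
def skewContent (a b : ℕ → ℕ) (T : ℕ → ℕ → ℕ) (k : ℕ) : ℕ :=
  Nat.card {p : ℕ × ℕ // b p.1 ≤ p.2 ∧ p.2 < a p.1 ∧ T p.1 p.2 = k}

/-- Number of cells of the skew shape `a/b`. -/
def skewSize (a b : ℕ → ℕ) : ℕ :=
  Nat.card {p : ℕ × ℕ // b p.1 ≤ p.2 ∧ p.2 < a p.1}

/-- `T` is a semistandard filling of the shape `a` (zero outside, rows weakly increasing,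
columns strictly increasing). -/
def IsSSYT (a : ℕ → ℕ) (T : ℕ → ℕ → ℕ) : Prop :=
  (∀ i j, a i ≤ j → T i j = 0) ∧
  (∀ i j₁ j₂, j₁ ≤ j₂ → j₂ < a i → T i j₁ ≤ T i j₂) ∧
  (∀ i₁ i₂ j, i₁ < i₂ → j < a i₂ → T i₁ j < T i₂ j)

/-- The Kostka number: the number of semistandard Young tableaux of shape `a`
and content `c`. -/
def kostka (a c : ℕ → ℕ) : ℕ :=
  Nat.card {T : ℕ → ℕ → ℕ // IsSSYT a T ∧ ∀ k, skewContent a (fun _ => 0) T k = c k}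

/-- Number of entries equal to `k` in the prefix of the (right-to-left, top-to-bottom)
reading word of `T` ending at position `(i,j)`. -/
def lrCount (a b : ℕ → ℕ) (T : ℕ → ℕ → ℕ) (i j k : ℕ) : ℕ :=
  Nat.card {p : ℕ × ℕ //
    (p.1 < i ∨ (p.1 = i ∧ j ≤ p.2)) ∧ b p.1 ≤ p.2 ∧ p.2 < a p.1 ∧ T p.1 p.2 = k}

/-- `T` is a Littlewood–Richardson skew tableau of shape `a/b`: semistandard and its
reverse reading word is a lattice word. -/
def IsLR (a b : ℕ → ℕ) (T : ℕ → ℕ → ℕ) : Prop :=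
  (∀ i j, ¬(b i ≤ j ∧ j < a i) → T i j = 0) ∧
  (∀ i j₁ j₂, b i ≤ j₁ → j₁ ≤ j₂ → j₂ < a i → T i j₁ ≤ T i j₂) ∧
  (∀ i₁ i₂ j, i₁ < i₂ → b i₁ ≤ j → j < a i₁ → b i₂ ≤ j → j < a i₂ → T i₁ j < T i₂ j) ∧
  (∀ i j k, lrCount a b T i j (k + 1) ≤ lrCount a b T i j k)

/-- A Littlewood–Richardson multitableau of shape `α` with `r` parts: a chain of
partitions `0 = α(0) ⊆ α(1) ⊆ ⋯ ⊆ α(r) = α` together with Littlewood–Richardson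
fillings of the successive skew shapes. -/
structure LRMultiF (r : ℕ) (α : ℕ → ℕ) where
  chain : Fin (r + 1) → ℕ → ℕ
  antitone : ∀ k i j, i ≤ j → chain k j ≤ chain k i
  zero : ∀ i, chain 0 i = 0
  last : ∀ i, chain (Fin.last r) i = α i
  mono : ∀ (k : Fin r) (i : ℕ), chain k.castSucc i ≤ chain k.succ i
  T : Fin r → ℕ → ℕ → ℕ
  lr : ∀ k : Fin r, IsLR (chain k.succ) (chain k.castSucc) (T k)

/-- Content of the `k`-th tableau of a Littlewood–Richardson multitableau. -/
def LRMultiF.cont {r : ℕ} {α : ℕ → ℕ} (M : LRMultiF r α) (k : Fin r) : ℕ → ℕ :=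
  skewContent (M.chain k.succ) (M.chain k.castSucc) (M.T k)

/-- Size of the `k`-th tableau of a Littlewood–Richardson multitableau. -/
def LRMultiF.size {r : ℕ} {α : ℕ → ℕ} (M : LRMultiF r α) (k : Fin r) : ℕ :=
  skewSize (M.chain k.succ) (M.chain k.castSucc)

/-- `LR(α,β;ν)`: pairs of Littlewood–Richardson multitableaux of shapes `α`, `β`,
type `ν`, with equal contents. -/
def LRPairs (r : ℕ) (α β : ℕ → ℕ) (ν : Fin r → ℕ) :=
  {TS : LRMultiF r α × LRMultiF r β //
    (∀ k, TS.1.size k = ν k) ∧ (∀ k, TS.2.size k = ν k) ∧ ∀ k, TS.1.cont k = TS.2.cont k}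

/-- `LR*(α,β;ν)`: pairs of Littlewood–Richardson multitableaux of shapes `α`, `β`,
type `ν`, with termwise conjugate contents. -/
def LRPairsStar (n r : ℕ) (α β : ℕ → ℕ) (ν : Fin r → ℕ) :=
  {TS : LRMultiF r α × LRMultiF r β //
    (∀ k, TS.1.size k = ν k) ∧ (∀ k, TS.2.size k = ν k) ∧
      ∀ k m, TS.2.cont k m = conjFun n (TS.1.cont k) m}

/-- `lr(α,β;ν)`. -/
def lrNum (r : ℕ) (α β : ℕ → ℕ) (ν : Fin r → ℕ) : ℕ := Nat.card (LRPairs r α β ν)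

/-- `lr*(α,β;ν)`. -/
def lrStarNum (n r : ℕ) (α β : ℕ → ℕ) (ν : Fin r → ℕ) : ℕ :=
  Nat.card (LRPairsStar n r α β ν)

/-- A semistandard Young tableau (of arbitrary partition shape). -/
structure SSYTP where
  shape : ℕ → ℕ
  T : ℕ → ℕ → ℕ
  antitone : ∀ i j, i ≤ j → shape j ≤ shape i
  finite : ∃ N, ∀ i, N ≤ i → shape i = 0
  ssyt : IsSSYT shape T

/-- Content of a semistandard Young tableau. -/
def SSYTP.cont (P : SSYTP) : ℕ → ℕ := skewContent P.shape (fun _ => 0) P.T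

/-- The multiset of entries of a matrix. -/
def entriesM {p q : ℕ} (A : Fin p → Fin q → ℕ) : Multiset ℕ :=
  (Finset.univ : Finset (Fin p × Fin q)).val.map (fun ij => A ij.1 ij.2)

/-- The π-sequence of `A` is the partition `ν` (the weakly decreasing rearrangement of
the entries of `A` is `ν`). -/
def HasPiSeq {p q : ℕ} (A : Fin p → Fin q → ℕ) {n : ℕ} (ν : n.Partition) : Prop :=
  (entriesM A).filter (· ≠ 0) = ν.parts

end

/-!
Expanding the permutation characters, `φ^λ(g) φ^μ(g) φ^ν(g)` counts the maps
`F : Fin n → Fin p × Fin q × Fin r` with 1-marginals `λ, μ, ν` that are constant on the cycles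
of `g`. Summing against `sgn g` and exchanging the sums, each `F` contributes the sum of the sign
over its stabiliser, which is `1` if `F` is injective and `0` otherwise, since a transposition in
the stabiliser pairs its elements off with opposite signs. An injective `F` with the prescribed
marginals is an ordering of its image, an `n`-element set of cells whose indicator is a binary
matrix with 1-marginals `λ, μ, ν`; so the sum is `n!` times the number of such matrices.
-/

open Function

theorem sum_sign_of_comp_eq {R α β : Type*} [Ring R] [Fintype α] [DecidableEq α] (F : α → β) :
    ∑ g : Perm α, (if F ∘ g = F then ((Perm.sign g : ℤ) : R) else 0) =
      if Injective F then 1 else 0 := by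
  split_ifs with hF
  · rw [Fintype.sum_eq_single 1]
    · simp
    · exact fun g hg => if_neg fun hg' => hg (Perm.ext fun x => hF (congrFun hg' x))
  · obtain ⟨x, y, hxy, hne⟩ : ∃ x y, F x = F y ∧ x ≠ y := by
      simpa [Injective] using hF
    have hswap (z : α) : F (swap x y z) = F z := by
      rcases eq_or_ne z x with rfl | hzx
      · simp [hxy]
      rcases eq_or_ne z y with rfl | hzy
      · simp [hxy]
      · rw [swap_apply_of_ne_of_ne hzx hzy]
    have hfix (g : Perm α) : F ∘ ⇑(g * swap x y) = F ↔ F ∘ g = F := by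
      refine ⟨fun h => funext fun z => ?_, fun h => funext fun z => ?_⟩
      · simpa [hswap] using congrFun h (swap x y z)
      · simpa [hswap] using congrFun h (swap x y z)
    refine Finset.sum_ninvolution (· * swap x y) (fun g => ?_) (fun g _ => by simpa using hne)
      (fun _ => Finset.mem_univ _) (fun g => by simp [mul_assoc])
    simp only [hfix, Perm.sign_mul, Perm.sign_swap hne]
    split_ifs <;> simp

theorem sum_card_comp_eq_mul_sign {R α β : Type*} [Ring R] [Fintype α] [DecidableEq α]
    [Fintype β] (P : (α → β) → Prop) :
    ∑ g : Perm α, (Nat.card {F : α → β // P F ∧ F ∘ g = F} : R) * ((Perm.sign g : ℤ) : R) =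
      Nat.card {F : α → β // Injective F ∧ P F} := by
  simp only [Nat.card_eq_fintype_card, Fintype.card_subtype, Finset.natCast_card_filter,
    Finset.sum_mul, ite_mul, one_mul, zero_mul, ite_and]
  rw [Finset.sum_comm]
  refine Finset.sum_congr rfl fun F _ => ?_
  rw [Finset.sum_ite_irrel, Finset.sum_const_zero, sum_sign_of_comp_eq]
  split_ifs <;> rfl

theorem Nat.card_subtype_prod_arrow {α β γ : Type*} (P : (α → β) → Prop) (Q : (α → γ) → Prop) :
    Nat.card {F : α → β × γ // P (Prod.fst ∘ F) ∧ Q (Prod.snd ∘ F)} =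
      Nat.card {f // P f} * Nat.card {f // Q f} := by
  rw [← Nat.card_prod]
  exact Nat.card_congr (((Equiv.arrowProdEquivProdArrow _ _ _).subtypeEquiv fun _ => Iff.rfl).trans
    Equiv.subtypeProdEquivProd)

theorem comp_eq_self_prod_iff {α β γ : Type*} (F : α → β × γ) (g : α → α) :
    F ∘ g = F ↔ (Prod.fst ∘ F) ∘ g = Prod.fst ∘ F ∧ (Prod.snd ∘ F) ∘ g = Prod.snd ∘ F := by
  simp only [funext_iff, comp_apply, Prod.ext_iff, forall_and]

theorem Nat.card_equiv_of_card_eq {α β : Type*} [Finite α] [Finite β]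
    (h : Nat.card β = Nat.card α) : Nat.card (α ≃ β) = (Nat.card α).factorial := by
  obtain ⟨e⟩ := Finite.card_eq.1 h
  rw [← Nat.card_perm, Nat.card_congr (Equiv.equivCongr (Equiv.refl α) e.symm)]

theorem Nat.card_injective_of_range {α γ : Type*} [Finite α] [Fintype γ] (P : Set γ → Prop) :
    Nat.card {F : α → γ // Injective F ∧ P (Set.range F)} =
      (Nat.card α).factorial * Nat.card {S : Set γ // Nat.card S = Nat.card α ∧ P S} := by
  let range' (F : {F : α → γ // Injective F ∧ P (Set.range F)}) :
      {S : Set γ // Nat.card S = Nat.card α ∧ P S} :=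
    ⟨Set.range F.1, Nat.card_range_of_injective F.2.1, F.2.2⟩
  have fiber (S : {S : Set γ // Nat.card S = Nat.card α ∧ P S}) :
      {F // range' F = S} ≃ (α ≃ S.1) :=
    { toFun F := (Equiv.ofInjective F.1.1 F.1.2.1).trans
        (Equiv.setCongr (congrArg Subtype.val F.2))
      invFun e := ⟨⟨Subtype.val ∘ e, Subtype.val_injective.comp e.injective, by
          rw [Set.range_comp, e.range_eq_univ, Set.image_univ, Subtype.range_coe]; exact S.2.2⟩,
        Subtype.ext (by simp [range', Set.range_comp, e.range_eq_univ])⟩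
      left_inv _ := rfl
      right_inv _ := Equiv.ext fun _ => Subtype.ext rfl }
  rw [← Nat.card_congr (Equiv.sigmaFiberEquiv range'), Nat.card_sigma,
    Finset.sum_congr rfl fun S _ => (Nat.card_congr (fiber S)).trans
      (Nat.card_equiv_of_card_eq S.2.1),
    Finset.sum_const, Finset.card_univ, ← Nat.card_eq_fintype_card, smul_eq_mul, mul_comm]

theorem Fintype.sum_ite_fst_eq {β γ M : Type*} [Fintype β] [Fintype γ] [DecidableEq β]
    [AddCommMonoid M] (f : β × γ → M) (b : β) :
    ∑ v, (if v.1 = b then f v else 0) = ∑ c, f (b, c) := by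
  rw [Fintype.sum_prod_type, Fintype.sum_eq_single b fun a ha => by simp [ha]]
  simp

theorem Fintype.sum_ite_snd_eq {β γ M : Type*} [Fintype β] [Fintype γ] [DecidableEq γ]
    [AddCommMonoid M] (f : β × γ → M) (c : γ) :
    ∑ v, (if v.2 = c then f v else 0) = ∑ b, f (b, c) := by
  rw [Fintype.sum_prod_type]
  exact Finset.sum_congr rfl fun b _ => by simp

noncomputable def fiberCard {α β : Type*} (f : α → β) (b : β) : ℕ := Nat.card {x // f x = b}

theorem fiberCard_comp_equiv {α α' β : Type*} (f : α → β) (e : α' ≃ α) :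
    fiberCard (f ∘ e) = fiberCard f :=
  funext fun _ => Nat.card_congr (e.subtypeEquiv fun _ => Iff.rfl)

theorem sum_fiberCard {α β : Type*} [Finite α] [Fintype β] (f : α → β) :
    ∑ b, fiberCard f b = Nat.card α := by
  rw [← Nat.card_congr (Equiv.sigmaFiberEquiv f), Nat.card_sigma]
  rfl

theorem extc_injective {p : ℕ} : Injective (extc : (Fin p → ℕ) → ℕ → ℕ) :=
  fun c d h => funext fun i => by simpa [extc] using congrFun h i

theorem fiberCard_val_comp {α : Type*} {p : ℕ} (f : α → Fin p) :
    fiberCard (fun x => (f x : ℕ)) = extc (fiberCard f) := by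
  funext k
  unfold extc
  split_ifs with hk
  · exact Nat.card_congr (Equiv.subtypeEquivRight fun x => by simp [Fin.ext_iff])
  · have : IsEmpty {x // (f x : ℕ) = k} := ⟨fun x => hk (x.2 ▸ (f x.1).2)⟩
    exact Nat.card_of_isEmpty

theorem lt_of_fiberCard_eq_extc {α : Type*} [Finite α] {p : ℕ} {f : α → ℕ} {c : Fin p → ℕ}
    (hf : fiberCard f = extc c) (x : α) : f x < p := by
  by_contra hx
  have : Nonempty {y // f y = f x} := ⟨⟨x, rfl⟩⟩
  have hpos : 0 < fiberCard f (f x) := Nat.card_pos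
  simp [hf, extc, hx] at hpos

theorem permChar_extc {n p : ℕ} (c : Fin p → ℕ) (g : Perm (Fin n)) :
    permChar n (extc c) g = Nat.card {f : Fin n → Fin p // fiberCard f = c ∧ f ∘ g = f} := by
  have hval (f : Fin n → Fin p) : fiberCard (fun x => (f x : ℕ)) = extc c ↔ fiberCard f = c := by
    rw [fiberCard_val_comp, extc_injective.eq_iff]
  rw [permChar, Nat.cast_inj]
  exact Nat.card_congr
    { toFun f := ⟨fun x => ⟨f.1 x, lt_of_fiberCard_eq_extc (funext f.2.1) x⟩,
        (hval _).1 (funext f.2.1), funext fun x => Fin.ext (f.2.2 x)⟩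
      invFun f := ⟨fun x => f.1 x, congrFun ((hval f.1).2 f.2.1),
        fun x => congrArg Fin.val (congrFun f.2.2 x)⟩
      left_inv _ := rfl
      right_inv _ := rfl }

theorem fiberCard_comp_subtype_val {γ δ : Type*} [Fintype γ] [DecidableEq δ] (S : Set γ)
    (π : γ → δ) (d : δ) :
    fiberCard (π ∘ ((↑) : S → γ)) d = ∑ v, if π v = d then (if v ∈ S then 1 else 0) else 0 := by
  dsimp only [fiberCard, comp_apply]
  rw [Nat.card_congr (Equiv.subtypeSubtypeEquivSubtypeInter (· ∈ S) (π · = d)),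
    Nat.card_eq_fintype_card, Fintype.card_subtype, Finset.card_filter]
  exact Finset.sum_congr rfl fun v _ => by split_ifs <;> simp_all

section Marginals

variable {α : Type*} {p q r : ℕ} (l : Fin p → ℕ) (m : Fin q → ℕ) (ν : Fin r → ℕ)

def HasMarginals (F : α → Fin p × Fin q × Fin r) : Prop :=
  fiberCard (Prod.fst ∘ F) = l ∧ fiberCard (Prod.fst ∘ Prod.snd ∘ F) = m ∧
    fiberCard (Prod.snd ∘ Prod.snd ∘ F) = ν

theorem permChar_mul_permChar_mul_permChar {n : ℕ} (g : Perm (Fin n)) :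
    permChar n (extc l) g * permChar n (extc m) g * permChar n (extc ν) g =
      Nat.card {F : Fin n → Fin p × Fin q × Fin r // HasMarginals l m ν F ∧ F ∘ g = F} := by
  rw [permChar_extc, permChar_extc, permChar_extc, mul_assoc, ← Nat.cast_mul, ← Nat.cast_mul,
    ← Nat.card_subtype_prod_arrow, ← Nat.card_subtype_prod_arrow, Nat.cast_inj]
  refine Nat.card_congr (Equiv.subtypeEquivRight fun F => ?_)
  simp only [HasMarginals, comp_eq_self_prod_iff F, comp_eq_self_prod_iff (Prod.snd ∘ F)]
  tauto

theorem hasMarginals_comp_equiv {α' : Type*} (F : α → Fin p × Fin q × Fin r) (e : α' ≃ α) :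
    HasMarginals l m ν (F ∘ e) ↔ HasMarginals l m ν F := by
  simp only [HasMarginals, ← comp_assoc, fiberCard_comp_equiv]

variable {l m ν} in
theorem HasMarginals.card_eq [Finite α] {F : α → Fin p × Fin q × Fin r}
    (hF : HasMarginals l m ν F) : Nat.card α = ∑ i, l i := by
  rw [← hF.1, sum_fiberCard]

theorem card_injective_hasMarginals {n : ℕ} (hl : ∑ i, l i = n) :
    Nat.card {F : Fin n → Fin p × Fin q × Fin r // Injective F ∧ HasMarginals l m ν F} =
      n.factorial * Nat.card {S : Set (Fin p × Fin q × Fin r) //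
        HasMarginals l m ν ((↑) : S → Fin p × Fin q × Fin r)} := by
  have hrange {F : Fin n → Fin p × Fin q × Fin r} (hF : Injective F) :
      HasMarginals l m ν F ↔ HasMarginals l m ν ((↑) : Set.range F → _) := by
    rw [← hasMarginals_comp_equiv l m ν _ (Equiv.ofInjective F hF)]
    rfl
  rw [Nat.card_congr (Equiv.subtypeEquivRight fun F => and_congr_right hrange),
    Nat.card_injective_of_range (fun S : Set (Fin p × Fin q × Fin r) =>
      HasMarginals l m ν ((↑) : S → Fin p × Fin q × Fin r)),
    Nat.card_fin]
  congr 1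
  exact Nat.card_congr (Equiv.subtypeEquivRight fun S =>
    ⟨And.right, fun hS => ⟨hS.card_eq.trans hl, hS⟩⟩)

theorem hasMarginals_subtype_val_iff (S : Set (Fin p × Fin q × Fin r)) :
    HasMarginals l m ν ((↑) : S → Fin p × Fin q × Fin r) ↔
      (∀ i, ∑ j, ∑ k, (if (i, j, k) ∈ S then 1 else 0) = l i) ∧
      (∀ j, ∑ i, ∑ k, (if (i, j, k) ∈ S then 1 else 0) = m j) ∧
      (∀ k, ∑ i, ∑ j, (if (i, j, k) ∈ S then 1 else 0) = ν k) := by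
  -- each fibre sum has to be collapsed before the product sum around it is split
  simp only [HasMarginals, funext_iff, ← comp_assoc, fiberCard_comp_subtype_val, comp_apply,
    Fintype.sum_ite_fst_eq]
  simp only [Fintype.sum_prod_type (α₁ := Fin p), Fintype.sum_ite_fst_eq, Fintype.sum_ite_snd_eq]
  simp only [Fintype.sum_prod_type]

theorem card_binary_tensor_eq_card_set :
    Nat.card {A : Fin p → Fin q → Fin r → ℕ // (∀ i j k, A i j k ≤ 1) ∧
        (∀ i, ∑ j, ∑ k, A i j k = l i) ∧ (∀ j, ∑ i, ∑ k, A i j k = m j) ∧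
        (∀ k, ∑ i, ∑ j, A i j k = ν k)} =
      Nat.card {S : Set (Fin p × Fin q × Fin r) //
        HasMarginals l m ν ((↑) : S → Fin p × Fin q × Fin r)} := by
  -- phrased through an equation so that membership in `S` is decided classically, as in
  -- `hasMarginals_subtype_val_iff`
  have indicator_eq {A : Fin p → Fin q → Fin r → ℕ} (hA : ∀ i j k, A i j k ≤ 1)
      {S : Set (Fin p × Fin q × Fin r)} (hS : S = {v | A v.1 v.2.1 v.2.2 = 1}) (i j k) :
      (if (i, j, k) ∈ S then 1 else 0) = A i j k := by
    have := hA i j k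
    subst hS
    split_ifs with h <;> simp only [Set.mem_ofPred_eq] at h <;> omega
  exact Nat.card_congr
    { toFun A := ⟨{v | A.1 v.1 v.2.1 v.2.2 = 1}, by
        simpa only [hasMarginals_subtype_val_iff, indicator_eq A.2.1 rfl] using A.2.2⟩
      invFun S := ⟨fun i j k => if (i, j, k) ∈ S.1 then 1 else 0,
        fun i j k => by dsimp only; split_ifs <;> omega,
        (hasMarginals_subtype_val_iff l m ν S).1 S.2⟩
      left_inv A := Subtype.ext (funext₃ (indicator_eq A.2.1 rfl))
      right_inv S := Subtype.ext (Set.ext fun v => by simp) }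

end Marginals

theorem stmt5_general (n p q r : ℕ) (l : Fin p → ℕ) (m : Fin q → ℕ) (ν : Fin r → ℕ)
    (hl : ∑ i, l i = n) :
    (Nat.card {A : Fin p → Fin q → Fin r → ℕ // (∀ i j k, A i j k ≤ 1) ∧
        (∀ i, ∑ j, ∑ k, A i j k = l i) ∧ (∀ j, ∑ i, ∑ k, A i j k = m j) ∧
        (∀ k, ∑ i, ∑ j, A i j k = ν k)} : ℚ) =
      innerChar n
        (fun g => permChar n (extc l) g * permChar n (extc m) g * permChar n (extc ν) g)
        (signChar n) := by
  rw [innerChar]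
  simp only [permChar_mul_permChar_mul_permChar, signChar]
  rw [sum_card_comp_eq_mul_sign, card_injective_hasMarginals l m ν hl,
    card_binary_tensor_eq_card_set, Nat.cast_mul, mul_div_cancel_left₀ _ (by positivity)]

/-- Snapper, dual: the number of `p × q × r` binary matrices with
1-marginals `l`, `m`, `ν` equals `⟨φ^l ⊗ φ^m ⊗ φ^ν, χ^{(1^n)}⟩`. -/
theorem stmt5 (n p q r : ℕ) (l : Fin p → ℕ) (m : Fin q → ℕ) (ν : Fin r → ℕ)
    (hl : ∑ i, l i = n) (hm : ∑ j, m j = n) (hν : ∑ k, ν k = n) :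
    (Nat.card {A : Fin p → Fin q → Fin r → ℕ // (∀ i j k, A i j k ≤ 1) ∧
        (∀ i, ∑ j, ∑ k, A i j k = l i) ∧ (∀ j, ∑ i, ∑ k, A i j k = m j) ∧
        (∀ k, ∑ i, ∑ j, A i j k = ν k)} : ℚ) =
      innerChar n
        (fun g => permChar n (extc l) g * permChar n (extc m) g * permChar n (extc ν) g)
        (signChar n) :=
  stmt5_general n p q r l m ν hl
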